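/- arXiv:1511.04818 — 4 statements merged into one kernel-verified Lean document; each statement's English description precedes it below -/
import Mathlib

section
/- Let N be a positive integer, x = (x_0,…,x_{N−1}) ∈ ℂ^N a unit vector, and k ∈ {0,…,N−1} such that the DFT coefficient y_k is real. In ℂ^N ⊕ ℂ^N define the unit vectors φ_k = (u, w) with u_j = (1/√2)·x_j·e^{2πi jk/N} and w_j = 1/√(2N), and φ^± = (±w, w). Then |⟨φ^+, φ_k⟩|² = (y_k² + 1)/4 + y_k/2 and |⟨φ^−, φ_k⟩|² = (y_k² + 1)/4 − y_k/2. -/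
/-! The overlap of `φ_k` with the flat part `(0, w)` is `⟨w, w⟩ = 1/2`, and with `(w, 0)` it is
`(1/√(2N)) (1/√2) ∑ⱼ e^{2πi jk/N} xⱼ = y_k / 2`. Hence `⟨φ^±, φ_k⟩ = (1 ± y_k)/2`, which is real
because `y_k` is, and squaring gives the two formulas. -/

open Complex ComplexConjugate

theorem Real.sqrt_two_mul_mul_sqrt_two (a : ℝ) : √(2 * a) * √2 = 2 * √a := by
  rw [Real.sqrt_mul zero_le_two, mul_right_comm, Real.mul_self_sqrt zero_le_two]

theorem sum_conj_flat_mul_scaled (N : ℕ) (x e : Fin N → ℂ) :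
    ∑ j : Fin N, conj (1 / (√(2 * N) : ℂ)) * (1 / (√2 : ℂ) * x j * e j) =
      (1 / (√N : ℂ) * ∑ j : Fin N, e j * x j) / 2 := by
  have hsqrt : (√(2 * N) : ℂ) * √2 = 2 * √N := by
    exact_mod_cast Real.sqrt_two_mul_mul_sqrt_two N
  rw [← ofReal_one, ← ofReal_div, conj_ofReal, ← Finset.mul_sum]
  simp_rw [mul_assoc, mul_comm (x _), ← Finset.mul_sum]
  push_cast
  rw [← mul_assoc, div_mul_div_comm, hsqrt]
  ring

theorem sum_conj_flat_mul_flat {N : ℕ} (hN : 0 < N) :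
    ∑ _j : Fin N, conj (1 / (√(2 * N) : ℂ)) * (1 / (√(2 * N) : ℂ)) = 1 / 2 := by
  rw [Finset.sum_const, Finset.card_univ, Fintype.card_fin, nsmul_eq_mul, conj_mul', norm_div,
    norm_one, norm_real, Real.norm_of_nonneg (Real.sqrt_nonneg _), ← ofReal_pow, div_pow,
    Real.sq_sqrt (by positivity)]
  have hN' : (N : ℂ) ≠ 0 := Nat.cast_ne_zero.mpr hN.ne'
  push_cast
  field_simp

theorem norm_ofReal_div_two_add_half_sq (r : ℝ) :
    ‖(r : ℂ) / 2 + 1 / 2‖ ^ 2 = (r ^ 2 + 1) / 4 + r / 2 := by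
  rw [show (r : ℂ) / 2 + 1 / 2 = ((r + 1) / 2 : ℝ) by push_cast; ring, norm_real, Real.norm_eq_abs,
    sq_abs]
  ring

theorem qftc_overlap_general (N : ℕ) (hN : 0 < N) (x : Fin N → ℂ)
    (k : Fin N)
    (y : ℂ)
    (hy : y = (1 / (Real.sqrt N : ℂ)) *
      ∑ j : Fin N,
        Complex.exp (2 * Real.pi * Complex.I * (j.val : ℂ) * (k.val : ℂ) / (N : ℂ)) * x j)
    (hreal : y.im = 0)
    (u w : Fin N → ℂ)
    (hu : ∀ j : Fin N, u j = (1 / (Real.sqrt 2 : ℂ)) * x j *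
      Complex.exp (2 * Real.pi * Complex.I * (j.val : ℂ) * (k.val : ℂ) / (N : ℂ)))
    (hw : ∀ j : Fin N, w j = (1 / (Real.sqrt (2 * N)) : ℂ)) :
    ‖((∑ j : Fin N, (starRingEnd ℂ) (w j) * u j)
        + ∑ j : Fin N, (starRingEnd ℂ) (w j) * w j)‖ ^ 2
      = (y.re ^ 2 + 1) / 4 + y.re / 2 ∧
    ‖((∑ j : Fin N, (starRingEnd ℂ) (-(w j)) * u j)
        + ∑ j : Fin N, (starRingEnd ℂ) (w j) * w j)‖ ^ 2
      = (y.re ^ 2 + 1) / 4 - y.re / 2 := by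
  have hwu : ∑ j, conj (w j) * u j = y / 2 := by
    simp only [hu, hw]
    rw [sum_conj_flat_mul_scaled, hy]
  have hww : ∑ j, conj (w j) * w j = 1 / 2 := by
    simp only [hw]
    exact sum_conj_flat_mul_flat hN
  obtain ⟨r, rfl⟩ : ∃ r : ℝ, y = r := conj_eq_iff_real.mp (conj_eq_iff_im.mpr hreal)
  simp only [map_neg, neg_mul, Finset.sum_neg_distrib, hwu, hww, ofReal_re]
  constructor
  · exact norm_ofReal_div_two_add_half_sq r
  · rw [← neg_div, ← ofReal_neg, norm_ofReal_div_two_add_half_sq]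
    ring

/-- With `φ_k = (u, w)`, `φ^± = (±w, w)` in `ℂ^N ⊕ ℂ^N` as in the QFTC algorithm, and the
DFT coefficient `y_k` real, `|⟨φ^±, φ_k⟩|² = (y_k² + 1)/4 ± y_k/2`. -/
theorem qftc_overlap (N : ℕ) (hN : 0 < N) (x : Fin N → ℂ)
    (hx : ∑ j : Fin N, ‖x j‖ ^ 2 = 1) (k : Fin N)
    (y : ℂ)
    (hy : y = (1 / (Real.sqrt N : ℂ)) *
      ∑ j : Fin N,
        Complex.exp (2 * Real.pi * Complex.I * (j.val : ℂ) * (k.val : ℂ) / (N : ℂ)) * x j)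
    (hreal : y.im = 0)
    (u w : Fin N → ℂ)
    (hu : ∀ j : Fin N, u j = (1 / (Real.sqrt 2 : ℂ)) * x j *
      Complex.exp (2 * Real.pi * Complex.I * (j.val : ℂ) * (k.val : ℂ) / (N : ℂ)))
    (hw : ∀ j : Fin N, w j = (1 / (Real.sqrt (2 * N)) : ℂ)) :
    ‖((∑ j : Fin N, (starRingEnd ℂ) (w j) * u j)
        + ∑ j : Fin N, (starRingEnd ℂ) (w j) * w j)‖ ^ 2
      = (y.re ^ 2 + 1) / 4 + y.re / 2 ∧
    ‖((∑ j : Fin N, (starRingEnd ℂ) (-(w j)) * u j)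
        + ∑ j : Fin N, (starRingEnd ℂ) (w j) * w j)‖ ^ 2
      = (y.re ^ 2 + 1) / 4 - y.re / 2 :=
  qftc_overlap_general N hN x k y hy hreal u w hu hw
end

section
/- Let N be a positive integer, x = (x_0,…,x_{N−1}) ∈ ℂ^N a unit vector, and k ∈ {0,…,N−1} such that the DFT coefficient y_k is real. In ℂ^N ⊕ ℂ^N define φ_k = (u, w) with u_j = (1/√2)·x_j·e^{2πi jk/N} and w_j = 1/√(2N), and φ^± = (±w, w). Then |⟨φ^+, φ_k⟩|² − |⟨φ^−, φ_k⟩|² = y_k. -/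
/-!
The overlap of `φ^±` with `φ_k` is `±y_k / 2 + 1 / 2`: the `u`-part contributes
`(1 / √(2N)) (1 / √2) Σ_j e^{2πijk/N} x_j = y_k / 2` and the `w`-part `N / (2N) = 1 / 2`.
For `z ∈ ℂ` and real `r`, `|z + r|² - |-z + r|² = 4 r Re z`, which here gives `Re y_k`.
-/

open Complex

lemma norm_add_ofReal_sq_sub_norm_neg_add_ofReal_sq (z : ℂ) (r : ℝ) :
    ‖z + r‖ ^ 2 - ‖-z + r‖ ^ 2 = 4 * r * z.re := by
  simp only [Complex.sq_norm, Complex.normSq_apply, add_re, add_im, neg_re, neg_im,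
    ofReal_re, ofReal_im]
  ring

lemma Real.sqrt_two_mul_mul_sqrt_two_s6 (t : ℝ) :
    Real.sqrt (2 * t) * Real.sqrt 2 = 2 * Real.sqrt t := by
  rw [Real.sqrt_mul zero_le_two, mul_right_comm, Real.mul_self_sqrt zero_le_two]

lemma sum_conj_inv_sqrt_two_mul_sq {N : ℕ} (hN : 0 < N) :
    ∑ _j : Fin N, (starRingEnd ℂ) (1 / (Real.sqrt (2 * N) : ℂ)) * (1 / (Real.sqrt (2 * N) : ℂ))
      = ((1 / 2 : ℝ) : ℂ) := by
  have hsq : (Real.sqrt (2 * N) : ℂ) * Real.sqrt (2 * N) = 2 * N := by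
    exact_mod_cast Real.mul_self_sqrt (by positivity)
  have hN' : (N : ℂ) ≠ 0 := by exact_mod_cast hN.ne'
  rw [Finset.sum_const, Finset.card_univ, Fintype.card_fin, nsmul_eq_mul, map_div₀, map_one,
    conj_ofReal, div_mul_div_comm, one_mul, hsq]
  field_simp
  norm_num

theorem qftc_overlap_difference_general (N : ℕ) (hN : 0 < N) (x : Fin N → ℂ)
    (k : Fin N)
    (y : ℂ)
    (hy : y = (1 / (Real.sqrt N : ℂ)) *
      ∑ j : Fin N,
        Complex.exp (2 * Real.pi * Complex.I * (j.val : ℂ) * (k.val : ℂ) / (N : ℂ)) * x j)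
    (u w : Fin N → ℂ)
    (hu : ∀ j : Fin N, u j = (1 / (Real.sqrt 2 : ℂ)) * x j *
      Complex.exp (2 * Real.pi * Complex.I * (j.val : ℂ) * (k.val : ℂ) / (N : ℂ)))
    (hw : ∀ j : Fin N, w j = (1 / (Real.sqrt (2 * N)) : ℂ)) :
    ‖(∑ j : Fin N, (starRingEnd ℂ) (w j) * u j)
        + ∑ j : Fin N, (starRingEnd ℂ) (w j) * w j‖ ^ 2
      - ‖(∑ j : Fin N, (starRingEnd ℂ) (-(w j)) * u j)
        + ∑ j : Fin N, (starRingEnd ℂ) (w j) * w j‖ ^ 2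
      = y.re := by
  have hconst : (1 / (Real.sqrt (2 * N) : ℂ)) * (1 / (Real.sqrt 2 : ℂ))
      = 1 / 2 * (1 / (Real.sqrt N : ℂ)) := by
    rw [div_mul_div_comm, one_mul, ← ofReal_mul,
      Real.sqrt_two_mul_mul_sqrt_two_s6, ofReal_mul, ofReal_ofNat, one_div_mul_one_div]
  have hwu : ∑ j, (starRingEnd ℂ) (w j) * u j = y / 2 := by
    calc ∑ j, (starRingEnd ℂ) (w j) * u j
        = 1 / 2 * (1 / (Real.sqrt N : ℂ)) * ∑ j : Fin N,
            Complex.exp (2 * Real.pi * Complex.I * (j.val : ℂ) * (k.val : ℂ) / (N : ℂ)) * x j := by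
          rw [← hconst, Finset.mul_sum]
          refine Finset.sum_congr rfl fun j _ => ?_
          rw [hu, hw, map_div₀, map_one, conj_ofReal]
          ring
      _ = y / 2 := by rw [hy]; ring
  have hwu_neg : ∑ j, (starRingEnd ℂ) (-(w j)) * u j = -(y / 2) := by
    simp only [map_neg, neg_mul, Finset.sum_neg_distrib, hwu]
  have hww : ∑ j, (starRingEnd ℂ) (w j) * w j = ((1 / 2 : ℝ) : ℂ) := by
    simp only [hw]
    exact sum_conj_inv_sqrt_two_mul_sq hN
  rw [hwu, hwu_neg, hww, norm_add_ofReal_sq_sub_norm_neg_add_ofReal_sq, div_ofNat_re]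
  ring

/-- With `φ_k = (u, w)`, `φ^± = (±w, w)` in `ℂ^N ⊕ ℂ^N` as in the QFTC algorithm, and the
DFT coefficient `y_k` real, `|⟨φ^+, φ_k⟩|² − |⟨φ^-, φ_k⟩|² = y_k`. -/
theorem qftc_overlap_difference (N : ℕ) (hN : 0 < N) (x : Fin N → ℂ)
    (hx : ∑ j : Fin N, ‖x j‖ ^ 2 = 1) (k : Fin N)
    (y : ℂ)
    (hy : y = (1 / (Real.sqrt N : ℂ)) *
      ∑ j : Fin N,
        Complex.exp (2 * Real.pi * Complex.I * (j.val : ℂ) * (k.val : ℂ) / (N : ℂ)) * x j)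
    (hreal : y.im = 0)
    (u w : Fin N → ℂ)
    (hu : ∀ j : Fin N, u j = (1 / (Real.sqrt 2 : ℂ)) * x j *
      Complex.exp (2 * Real.pi * Complex.I * (j.val : ℂ) * (k.val : ℂ) / (N : ℂ)))
    (hw : ∀ j : Fin N, w j = (1 / (Real.sqrt (2 * N)) : ℂ)) :
    ‖(∑ j : Fin N, (starRingEnd ℂ) (w j) * u j)
        + ∑ j : Fin N, (starRingEnd ℂ) (w j) * w j‖ ^ 2
      - ‖(∑ j : Fin N, (starRingEnd ℂ) (-(w j)) * u j)
        + ∑ j : Fin N, (starRingEnd ℂ) (w j) * w j‖ ^ 2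
      = y.re :=
  qftc_overlap_difference_general N hN x k y hy u w hu hw
end

section
/- Let H be a complex inner product space, let ψ₀, ψ₁ ∈ H be orthogonal unit vectors, let θ ∈ ℝ, and set ψ = sin(θ)·ψ₀ + cos(θ)·ψ₁. Define the reflections R_ψ(v) = v − 2⟨ψ, v⟩ψ and R₀(v) = v − 2⟨ψ₀, v⟩ψ₀, and the Grover-type operator Q = −R_ψ ∘ R₀. Then for every natural number ℓ, Q^ℓ(ψ) = sin((2ℓ+1)θ)·ψ₀ + cos((2ℓ+1)θ)·ψ₁. -/
/-!
The reflections in `ψ₀` and in `ψ` preserve the unit circle `α ↦ sin α • ψ₀ + cos α • ψ₁`,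
and each acts on it as a reflection of the angle; since negation shifts the angle by `π`, `Q`
acts as the rotation `α ↦ α + 2θ`, and `ψ` sits at angle `θ`.
-/

open Real

section CirclePoint

variable (𝕜 : Type*) {E : Type*} [RCLike 𝕜] [NormedAddCommGroup E] [InnerProductSpace 𝕜 E]

noncomputable def circlePoint (e₀ e₁ : E) (α : ℝ) : E :=
  (Real.sin α : 𝕜) • e₀ + (Real.cos α : 𝕜) • e₁

variable {𝕜} {e₀ e₁ : E}

theorem circlePoint_pi_div_two : circlePoint 𝕜 e₀ e₁ (π / 2) = e₀ := by
  simp [circlePoint]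

theorem circlePoint_sub_pi (α : ℝ) : circlePoint 𝕜 e₀ e₁ (α - π) = -circlePoint 𝕜 e₀ e₁ α := by
  simp only [circlePoint, Real.sin_sub_pi, Real.cos_sub_pi, RCLike.ofReal_neg, neg_smul, neg_add]

theorem inner_circlePoint (h₀ : ‖e₀‖ = 1) (h₁ : ‖e₁‖ = 1) (horth : inner 𝕜 e₀ e₁ = 0)
    (θ β : ℝ) :
    inner 𝕜 (circlePoint 𝕜 e₀ e₁ θ) (circlePoint 𝕜 e₀ e₁ β) = (Real.cos (θ - β) : 𝕜) := by
  have h₁₀ : inner 𝕜 e₁ e₀ = 0 := by rw [← inner_conj_symm, horth, map_zero]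
  simp only [circlePoint, inner_add_left, inner_add_right, inner_smul_left, inner_smul_right,
    RCLike.conj_ofReal, inner_self_eq_norm_sq_to_K, h₀, h₁, horth, h₁₀]
  rw [Real.cos_sub]
  push_cast
  ring

/-- The Householder reflection in `circlePoint θ` acts on the circle as the angle reflection
`β ↦ 2θ - π - β`. -/
theorem circlePoint_sub_two_inner_smul (h₀ : ‖e₀‖ = 1) (h₁ : ‖e₁‖ = 1)
    (horth : inner 𝕜 e₀ e₁ = 0) (θ β : ℝ) :
    circlePoint 𝕜 e₀ e₁ β
        - (2 * inner 𝕜 (circlePoint 𝕜 e₀ e₁ θ) (circlePoint 𝕜 e₀ e₁ β)) • circlePoint 𝕜 e₀ e₁ θ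
      = circlePoint 𝕜 e₀ e₁ (2 * θ - π - β) := by
  rw [inner_circlePoint h₀ h₁ horth]
  have hsin : Real.sin β - 2 * Real.cos (θ - β) * Real.sin θ = Real.sin (2 * θ - π - β) := by
    rw [sub_right_comm, Real.sin_sub_pi, Real.sin_sub, Real.cos_sub, Real.sin_two_mul,
      Real.cos_two_mul]
    linear_combination (-2 * Real.sin β) * Real.sin_sq_add_cos_sq θ
  have hcos : Real.cos β - 2 * Real.cos (θ - β) * Real.cos θ = Real.cos (2 * θ - π - β) := by
    rw [sub_right_comm, Real.cos_sub_pi, Real.cos_sub, Real.cos_sub, Real.sin_two_mul,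
      Real.cos_two_mul]
    ring
  simp only [circlePoint, ← hsin, ← hcos]
  push_cast
  match_scalars <;> ring

end CirclePoint

/-- Grover-type rotation: with `ψ = sin θ • ψ₀ + cos θ • ψ₁` for orthogonal unit vectors
`ψ₀, ψ₁` and `Q = -R_ψ ∘ R₀`, we have `Q^ℓ ψ = sin((2ℓ+1)θ) • ψ₀ + cos((2ℓ+1)θ) • ψ₁`. -/
theorem grover_iterate {H : Type*} [NormedAddCommGroup H] [InnerProductSpace ℂ H]
    (ψ₀ ψ₁ : H) (h0 : ‖ψ₀‖ = 1) (h1 : ‖ψ₁‖ = 1)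
    (horth : (inner ℂ ψ₀ ψ₁ : ℂ) = 0)
    (θ : ℝ) (ψ : H)
    (hψ : ψ = (Real.sin θ : ℂ) • ψ₀ + (Real.cos θ : ℂ) • ψ₁)
    (Rψ R₀ Q : H → H)
    (hRψ : ∀ v : H, Rψ v = v - ((2 : ℂ) * (inner ℂ ψ v : ℂ)) • ψ)
    (hR₀ : ∀ v : H, R₀ v = v - ((2 : ℂ) * (inner ℂ ψ₀ v : ℂ)) • ψ₀)
    (hQ : ∀ v : H, Q v = -(Rψ (R₀ v)))
    (ℓ : ℕ) :
    Q^[ℓ] ψ = (Real.sin ((2 * ℓ + 1) * θ) : ℂ) • ψ₀ + (Real.cos ((2 * ℓ + 1) * θ) : ℂ) • ψ₁ := by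
  set w := circlePoint ℂ ψ₀ ψ₁
  have hψw : ψ = w θ := hψ
  have hR₀w (α : ℝ) : R₀ (w α) = w (-α) := by
    have hrefl := circlePoint_sub_two_inner_smul h0 h1 horth (π / 2) α
    rw [circlePoint_pi_div_two] at hrefl
    rw [hR₀, hrefl]
    exact congrArg w (by ring)
  have hQw (α : ℝ) : Q (w α) = w (α + 2 * θ) := by
    rw [hQ, hR₀w, hRψ, hψw, circlePoint_sub_two_inner_smul h0 h1 horth,
      show 2 * θ - π - -α = α + 2 * θ - π by ring, circlePoint_sub_pi, neg_neg]
  rw [hψw]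
  change Q^[ℓ] (w θ) = w ((2 * ℓ + 1) * θ)
  induction ℓ with
  | zero => simp
  | succ n ih =>
    rw [Function.iterate_succ_apply', ih, hQw]
    congr 1
    push_cast
    ring
end

section
/- Let H be a complex inner product space, let ψ₀, ψ₁ ∈ H be orthogonal unit vectors, let θ ∈ ℝ, and set ψ = sin(θ)·ψ₀ + cos(θ)·ψ₁. Define the reflections R_ψ(v) = v − 2⟨ψ, v⟩ψ and R₀(v) = v − 2⟨ψ₀, v⟩ψ₀, and Q = −R_ψ ∘ R₀. Then Q(ψ₀ + i·ψ₁) = e^{2iθ}·(ψ₀ + i·ψ₁) and Q(ψ₀ − i·ψ₁) = e^{−2iθ}·(ψ₀ − i·ψ₁); that is, Q has eigenvalues e^{±2iθ} on the span of {ψ₀, ψ₁}. -/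
/-!
In the orthonormal pair `ψ₀, ψ₁` the composite of the two reflections is a rotation: writing
`s = sin θ`, `c = cos θ` and using `s² + c² = 1`, `Q` maps `a ψ₀ + b ψ₁` to
`(cos 2θ · a + sin 2θ · b) ψ₀ + (-sin 2θ · a + cos 2θ · b) ψ₁`.
The vectors `ψ₀ ± i ψ₁` are the eigenvectors of every plane rotation, with eigenvalues
`cos 2θ ± i sin 2θ = e^{±2iθ}`.
-/

open scoped InnerProductSpace ComplexConjugate

section Householder

variable {H : Type*} [NormedAddCommGroup H] [InnerProductSpace ℂ H]

noncomputable def householder (u v : H) : H := v - (2 * ⟪u, v⟫_ℂ) • u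

theorem inner_smul_add_smul_of_orthonormal {e₀ e₁ : H} (h₀ : ‖e₀‖ = 1) (h₁ : ‖e₁‖ = 1)
    (h₀₁ : ⟪e₀, e₁⟫_ℂ = 0) (a b a' b' : ℂ) :
    ⟪a • e₀ + b • e₁, a' • e₀ + b' • e₁⟫_ℂ = conj a * a' + conj b * b' := by
  have h₁₀ : ⟪e₁, e₀⟫_ℂ = 0 := inner_eq_zero_symm.mp h₀₁
  simp only [inner_add_left, inner_add_right, inner_smul_left, inner_smul_right,
    inner_self_eq_norm_sq_to_K, h₀, h₁, h₀₁, h₁₀]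
  push_cast
  ring

theorem householder_smul_add_smul {e₀ e₁ : H} (h₀ : ‖e₀‖ = 1) (h₁ : ‖e₁‖ = 1)
    (h₀₁ : ⟪e₀, e₁⟫_ℂ = 0) (p q a b : ℂ) :
    householder (p • e₀ + q • e₁) (a • e₀ + b • e₁) =
      (a - 2 * (conj p * a + conj q * b) * p) • e₀ +
        (b - 2 * (conj p * a + conj q * b) * q) • e₁ := by
  rw [householder, inner_smul_add_smul_of_orthonormal h₀ h₁ h₀₁]
  module

theorem householder_left_smul_add_smul {e₀ e₁ : H} (h₀ : ‖e₀‖ = 1) (h₁ : ‖e₁‖ = 1)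
    (h₀₁ : ⟪e₀, e₁⟫_ℂ = 0) (a b : ℂ) :
    householder e₀ (a • e₀ + b • e₁) = (-a) • e₀ + b • e₁ := by
  have h := householder_smul_add_smul h₀ h₁ h₀₁ 1 0 a b
  rw [one_smul, zero_smul, add_zero, map_one, map_zero] at h
  rw [h]
  module

theorem neg_householder_householder_smul_add_smul {e₀ e₁ : H} (h₀ : ‖e₀‖ = 1)
    (h₁ : ‖e₁‖ = 1) (h₀₁ : ⟪e₀, e₁⟫_ℂ = 0) (θ : ℝ) (a b : ℂ) :
    -householder ((Real.sin θ : ℂ) • e₀ + (Real.cos θ : ℂ) • e₁)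
        (householder e₀ (a • e₀ + b • e₁)) =
      (Complex.cos (2 * θ) * a + Complex.sin (2 * θ) * b) • e₀ +
        (-Complex.sin (2 * θ) * a + Complex.cos (2 * θ) * b) • e₁ := by
  rw [householder_left_smul_add_smul h₀ h₁ h₀₁, householder_smul_add_smul h₀ h₁ h₀₁,
    Complex.conj_ofReal, Complex.conj_ofReal, Complex.ofReal_sin, Complex.ofReal_cos,
    Complex.cos_two_mul, Complex.sin_two_mul]
  match_scalars
  · linear_combination (-2 * a) * Complex.sin_sq_add_cos_sq (θ : ℂ)
  · ring

end Householder

theorem rotation_smul_add_smul_eq_smul {M : Type*} [AddCommGroup M] [Module ℂ M]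
    (φ ε : ℂ) (hε : ε * ε = -1) (e₀ e₁ : M) :
    (Complex.cos φ * 1 + Complex.sin φ * ε) • e₀ + (-Complex.sin φ * 1 + Complex.cos φ * ε) • e₁ =
      (Complex.cos φ + Complex.sin φ * ε) • (e₀ + ε • e₁) := by
  match_scalars
  · ring
  · linear_combination -Complex.sin φ * hε

/-- The Grover-type operator `Q = -R_ψ ∘ R₀` has eigenvalues `e^{±2iθ}` on the span of
`{ψ₀, ψ₁}`, with eigenvectors `ψ₀ ± i ψ₁`. -/
theorem grover_eigenvalues {H : Type*} [NormedAddCommGroup H] [InnerProductSpace ℂ H]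
    (ψ₀ ψ₁ : H) (h0 : ‖ψ₀‖ = 1) (h1 : ‖ψ₁‖ = 1)
    (horth : (inner ℂ ψ₀ ψ₁ : ℂ) = 0)
    (θ : ℝ) (ψ : H)
    (hψ : ψ = (Real.sin θ : ℂ) • ψ₀ + (Real.cos θ : ℂ) • ψ₁)
    (Rψ R₀ Q : H → H)
    (hRψ : ∀ v : H, Rψ v = v - ((2 : ℂ) * (inner ℂ ψ v : ℂ)) • ψ)
    (hR₀ : ∀ v : H, R₀ v = v - ((2 : ℂ) * (inner ℂ ψ₀ v : ℂ)) • ψ₀)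
    (hQ : ∀ v : H, Q v = -(Rψ (R₀ v))) :
    Q (ψ₀ + Complex.I • ψ₁)
        = Complex.exp (2 * Complex.I * (θ : ℂ)) • (ψ₀ + Complex.I • ψ₁) ∧
    Q (ψ₀ - Complex.I • ψ₁)
        = Complex.exp (-(2 * Complex.I * (θ : ℂ))) • (ψ₀ - Complex.I • ψ₁) := by
  have hrot (ε : ℂ) (hε : ε * ε = -1) :
      Q (ψ₀ + ε • ψ₁) = (Complex.cos (2 * θ) + Complex.sin (2 * θ) * ε) • (ψ₀ + ε • ψ₁) := by
    rw [hQ, show Rψ = householder ψ from funext hRψ, show R₀ = householder ψ₀ from funext hR₀,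
      hψ, ← rotation_smul_add_smul_eq_smul _ _ hε,
      ← neg_householder_householder_smul_add_smul h0 h1 horth, one_smul]
  constructor
  · rw [hrot Complex.I Complex.I_mul_I, show 2 * Complex.I * θ = 2 * θ * Complex.I by ring,
      Complex.exp_mul_I]
  · rw [sub_eq_add_neg, ← neg_smul, hrot (-Complex.I) (by rw [neg_mul_neg, Complex.I_mul_I]),
      show -(2 * Complex.I * θ) = -(2 * θ) * Complex.I by ring, Complex.exp_mul_I,
      Complex.cos_neg, Complex.sin_neg, neg_mul, mul_neg]
end
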